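/- Let (X,Y) be a source with X binary and define the source Bhattacharyya parameter Z(X|Y) = 2·Σ_y P_Y(y)·√(P_{X|Y}(0|y)·P_{X|Y}(1|y)). If (X₁,Y₁),(X₂,Y₂) are two independent copies of (X,Y), then Z(X₁ ⊕ X₂ | Y₁,Y₂) ≤ 2·Z(X|Y) − Z(X|Y)². -/

import Mathlib

/-!
Write `a = √(p₀ p₁)` and `b = p₀ + p₁ - a` for the two entries of `p` at an observation `y`,
so that `Σ a = Z/2` and `Σ b = 1 - Z/2`. For one observation pair the Bhattacharyya term of
the xor is at most `a₁ b₂ + b₁ a₂`: the square of the right side exceeds the square of the left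
by `2 a₁ a₂ (p₀ + p₁ - 2a₁)(q₀ + q₁ - 2a₂)`, which is nonnegative by AM-GM. Summing over pairs
gives `Z(X₁ ⊕ X₂ | Y₁,Y₂) ≤ Z₁ + Z₂ - Z₁ Z₂`, and the theorem is the case of equal sources.
-/

/-- Conditional source Bhattacharyya parameter
`Z(X|W) = 2 Σ_w P_W(w) √(P_{X|W}(0|w) P_{X|W}(1|w)) = 2 Σ_w √(q(0,w) q(1,w))`
for a joint pmf `q x w` with binary `x`. -/
noncomputable def bhat {β : Type*} (q : Bool → β → ℝ) : ℝ :=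
  2 * ∑' w : β, Real.sqrt (q false w * q true w)

/-- Joint pmf of `(X₁ ⊕ X₂, (Y₁, Y₂))` for independent sources `p` and `q`. -/
def xorConv {β γ : Type*} (p : Bool → β → ℝ) (q : Bool → γ → ℝ) : Bool → β × γ → ℝ :=
  fun u y => ∑ x₂ : Bool, p (xor u x₂) y.1 * q x₂ y.2

lemma two_mul_sqrt_mul_le_add {x y : ℝ} (hx : 0 ≤ x) (hy : 0 ≤ y) :
    2 * √(x * y) ≤ x + y := by
  rw [Real.sqrt_mul hx]
  nlinarith [sq_nonneg (√x - √y), Real.sq_sqrt hx, Real.sq_sqrt hy]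

lemma sqrt_mul_le_add {x y : ℝ} (hx : 0 ≤ x) (hy : 0 ≤ y) : √(x * y) ≤ x + y := by
  linarith [two_mul_sqrt_mul_le_add hx hy, Real.sqrt_nonneg (x * y)]

lemma sqrt_xor_mul_le {x₀ x₁ z₀ z₁ : ℝ} (hx₀ : 0 ≤ x₀) (hx₁ : 0 ≤ x₁) (hz₀ : 0 ≤ z₀)
    (hz₁ : 0 ≤ z₁) :
    √((x₀ * z₀ + x₁ * z₁) * (x₁ * z₀ + x₀ * z₁)) ≤
      √(x₀ * x₁) * (z₀ + z₁ - √(z₀ * z₁)) + (x₀ + x₁ - √(x₀ * x₁)) * √(z₀ * z₁) := by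
  set u := √(x₀ * x₁)
  set v := √(z₀ * z₁)
  have hu : 0 ≤ u := Real.sqrt_nonneg _
  have hv : 0 ≤ v := Real.sqrt_nonneg _
  have hu2 : u ^ 2 = x₀ * x₁ := Real.sq_sqrt (mul_nonneg hx₀ hx₁)
  have hv2 : v ^ 2 = z₀ * z₁ := Real.sq_sqrt (mul_nonneg hz₀ hz₁)
  have hamx : 0 ≤ x₀ + x₁ - 2 * u := by linarith [two_mul_sqrt_mul_le_add hx₀ hx₁]
  have hamz : 0 ≤ z₀ + z₁ - 2 * v := by linarith [two_mul_sqrt_mul_le_add hz₀ hz₁]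
  have hrhs : 0 ≤ u * (z₀ + z₁ - v) + (x₀ + x₁ - u) * v :=
    add_nonneg (mul_nonneg hu (by linarith)) (mul_nonneg (by linarith) hv)
  have hgap : (u * (z₀ + z₁ - v) + (x₀ + x₁ - u) * v) ^ 2
      - (x₀ * z₀ + x₁ * z₁) * (x₁ * z₀ + x₀ * z₁)
      = 2 * u * v * (x₀ + x₁ - 2 * u) * (z₀ + z₁ - 2 * v) := by
    linear_combination ((z₀ + z₁) ^ 2 - 4 * v ^ 2) * hu2 + (x₀ - x₁) ^ 2 * hv2
  have hsq : (x₀ * z₀ + x₁ * z₁) * (x₁ * z₀ + x₀ * z₁) ≤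
      (u * (z₀ + z₁ - v) + (x₀ + x₁ - u) * v) ^ 2 := by
    rw [← sub_nonneg, hgap]
    exact mul_nonneg (mul_nonneg (mul_nonneg (mul_nonneg zero_le_two hu) hv) hamx) hamz
  exact (Real.sqrt_le_left hrhs).mpr hsq

section Source

variable {β : Type*} {p : Bool → β → ℝ}

lemma hasSum_false_add_true (hsum : HasSum (fun z : Bool × β => p z.1 z.2) 1) :
    HasSum (fun y => p false y + p true y) 1 := by
  have := ((Equiv.prodComm β Bool).hasSum_iff.mpr hsum).prod_fiberwise fun _ => hasSum_fintype _
  simpa only [Fintype.sum_bool, Function.comp_apply, Equiv.prodComm_apply, Prod.fst_swap,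
    Prod.snd_swap, add_comm] using this

lemma add_sub_sqrt_mul_nonneg (hp : ∀ x y, 0 ≤ p x y) :
    0 ≤ fun y => p false y + p true y - √(p false y * p true y) :=
  fun y => sub_nonneg.mpr (sqrt_mul_le_add (hp _ y) (hp _ y))

lemma hasSum_sqrt_mul_half_bhat (hp : ∀ x y, 0 ≤ p x y)
    (hsum : HasSum (fun z : Bool × β => p z.1 z.2) 1) :
    HasSum (fun y => √(p false y * p true y)) (bhat p / 2) := by
  have hsummable : Summable fun y => √(p false y * p true y) :=
    .of_nonneg_of_le (fun _ => Real.sqrt_nonneg _) (fun y => sqrt_mul_le_add (hp _ y) (hp _ y))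
      (hasSum_false_add_true hsum).summable
  rw [bhat, mul_div_cancel_left₀ _ two_ne_zero]
  exact hsummable.hasSum

lemma hasSum_add_sub_sqrt_mul (hp : ∀ x y, 0 ≤ p x y)
    (hsum : HasSum (fun z : Bool × β => p z.1 z.2) 1) :
    HasSum (fun y => p false y + p true y - √(p false y * p true y)) (1 - bhat p / 2) :=
  (hasSum_false_add_true hsum).sub (hasSum_sqrt_mul_half_bhat hp hsum)

end Source

lemma sqrt_xorConv_mul_le {β γ : Type*} {p : Bool → β → ℝ} {q : Bool → γ → ℝ}
    (hp : ∀ x y, 0 ≤ p x y) (hq : ∀ x y, 0 ≤ q x y) (y : β × γ) :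
    √(xorConv p q false y * xorConv p q true y) ≤
      √(p false y.1 * p true y.1) * (q false y.2 + q true y.2 - √(q false y.2 * q true y.2)) +
        (p false y.1 + p true y.1 - √(p false y.1 * p true y.1)) * √(q false y.2 * q true y.2) := by
  have := sqrt_xor_mul_le (hp false y.1) (hp true y.1) (hq false y.2) (hq true y.2)
  simpa only [xorConv, Fintype.sum_bool, Bool.xor_false, Bool.xor_true, Bool.not_true,
    Bool.not_false, add_comm] using this

theorem bhat_xorConv_le {β γ : Type*} (p : Bool → β → ℝ) (q : Bool → γ → ℝ)
    (hp : ∀ x y, 0 ≤ p x y) (hq : ∀ x y, 0 ≤ q x y)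
    (hpsum : HasSum (fun z : Bool × β => p z.1 z.2) 1)
    (hqsum : HasSum (fun z : Bool × γ => q z.1 z.2) 1) :
    bhat (xorConv p q) ≤ bhat p + bhat q - bhat p * bhat q := by
  have hap := hasSum_sqrt_mul_half_bhat hp hpsum
  have haq := hasSum_sqrt_mul_half_bhat hq hqsum
  have hbp := hasSum_add_sub_sqrt_mul hp hpsum
  have hbq := hasSum_add_sub_sqrt_mul hq hqsum
  have hsummable_ab := hap.summable.mul_of_nonneg hbq.summable (fun _ => Real.sqrt_nonneg _)
    (add_sub_sqrt_mul_nonneg hq)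
  have hsummable_ba := hbp.summable.mul_of_nonneg haq.summable (add_sub_sqrt_mul_nonneg hp)
    (fun _ => Real.sqrt_nonneg _)
  have hbound := (hap.mul hbq hsummable_ab).add (hbp.mul haq hsummable_ba)
  have hsummable := Summable.of_nonneg_of_le (fun _ => Real.sqrt_nonneg _)
    (sqrt_xorConv_mul_le hp hq) hbound.summable
  have := hasSum_le (sqrt_xorConv_mul_le hp hq) hsummable.hasSum hbound
  rw [bhat]
  linarith

/-- `Z(X₁ ⊕ X₂ | Y₁,Y₂) ≤ 2 Z(X|Y) − Z(X|Y)²`. -/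
theorem stmt3 (p : Bool → ℕ → ℝ) (hp : ∀ x y, 0 ≤ p x y)
    (hsum : HasSum (fun z : Bool × ℕ => p z.1 z.2) 1) :
    bhat (fun (u₁ : Bool) (y : ℕ × ℕ) =>
        ∑ x₂ : Bool, p (xor u₁ x₂) y.1 * p x₂ y.2) ≤
      2 * bhat p - (bhat p) ^ 2 :=
  (bhat_xorConv_le p p hp hp hsum hsum).trans_eq (by ring)
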